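/- Let X be a topological space and col : X → X → Prop a symmetric relation. Let V and V' be finite pumped configurations in X, with pebble graphs G = (V,E) and G' = (V',E') whose edge paths satisfy the edge-planner guarantee. Let C : Fin m → V and C' : Fin m → V' be configurations and suppose there exists a multi-robot path for m robots from C to C'. Let D : Fin m → V and D' : Fin m → V' be configurations with D ≡ C (with respect to G) and D' ≡ C' (with respect to G'). Then there exists a permutation σ of Fin m and a multi-robot path for m robots from D to D' ∘ σ. -/

import Mathlib

/-- A multi-robot path for `m` robots from `A` to `B`: a continuous map
`f : [0,1] → (Fin m → X)` with `f 0 = A`, `f 1 = B`, such that at every time `t`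
no two distinct robots collide. -/
def MultiRobotPath {X : Type*} [TopologicalSpace X] (col : X → X → Prop) {m : ℕ}
    (A B : Fin m → X) : Prop :=
  ∃ f : unitInterval → (Fin m → X), Continuous f ∧ f 0 = A ∧ f 1 = B ∧
    ∀ t : unitInterval, ∀ i j : Fin m, i ≠ j → ¬ col (f t i) (f t j)

/-- A pumped configuration: a finite set of single-robot configurations, any two
distinct members of which are non-colliding. -/
def IsPumped {X : Type*} (col : X → X → Prop) (V : Set X) : Prop :=
  V.Finite ∧ ∀ v ∈ V, ∀ v' ∈ V, v ≠ v' → ¬ col v v'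

/-- Two placements have the same signature: every connected component of `G`
contains the same number of robots/pebbles of each. -/
def SameSignature {V ι κ : Type*} (G : SimpleGraph V) (S : ι → V) (T : κ → V) : Prop :=
  ∀ K : G.ConnectedComponent,
    Nat.card {i : ι // G.connectedComponentMk (S i) = K} =
    Nat.card {j : κ // G.connectedComponentMk (T j) = K}

/-!
Sliding one pebble along an edge of a pebble graph to an unoccupied vertex is a multi-robot
path: the moving robot follows the edge path, which by the edge-planner guarantee avoids the
robots standing still, and these do not collide with each other since the configuration is
pumped. Forgetting labels, any two configurations with the same signature are related by such
slides. Indeed a pebble at `s` can be transported to any unoccupied `t` along any walk from `s`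
to `t` (if the next vertex is occupied, first transport that pebble to `t`, then step into the
vacated vertex), and transporting a pebble of one configuration that is missing from the other
to a vertex of its component that the other occupies and the first does not shrinks their
difference. Hence `D` reaches `C` and `C'` reaches `D'` up to relabelling, and the given path
from `C` to `C'` joins the two.
-/

open Finset Function SimpleGraph

section PebbleMotion

variable {W : Type*}

def PebbleMove [DecidableEq W] (G : SimpleGraph W) (S S' : Finset W) : Prop :=
  ∃ v ∈ S, ∃ w ∉ S, G.Adj v w ∧ S' = insert w (S.erase v)

variable {G : SimpleGraph W}

theorem PebbleMove.reflTransGen_of_walk [DecidableEq W] {s t : W} (p : G.Walk s t)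
    {S : Finset W} (hs : s ∈ S) (ht : t ∉ S) :
    Relation.ReflTransGen (PebbleMove G) S (insert t (S.erase s)) := by
  induction p generalizing S with
  | nil => exact absurd hs ht
  | @cons s y t hsy p ih =>
    by_cases hy : y ∈ S
    · have hsy' : s ≠ y := hsy.ne
      have hyt : y ≠ t := ne_of_mem_of_not_mem hy ht
      refine (ih hy ht).tail ⟨s, ?_, y, ?_, hsy, ?_⟩
      · simp [hs, hsy']
      · simp [hyt]
      · ext a
        simp only [mem_insert, mem_erase]
        grind
    · have hstep : PebbleMove G S (insert y (S.erase s)) := ⟨s, hs, y, hy, hsy, rfl⟩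
      obtain rfl | hyt := eq_or_ne y t
      · exact .single hstep
      have hrest := ih (S := insert y (S.erase s)) (mem_insert_self _ _)
        (by simp [hyt.symm, ht])
      rw [erase_insert fun h => hy (mem_of_mem_erase h)] at hrest
      exact .head hstep hrest

theorem card_filter_insert_erase [DecidableEq W] {β : Type*} [DecidableEq β] (f : W → β)
    {S : Finset W} {s t : W} (hs : s ∈ S) (ht : t ∉ S) (hst : f s = f t) (b : β) :
    #{v ∈ insert t (S.erase s) | f v = b} = #{v ∈ S | f v = b} := by
  by_cases hb : f s = b
  · rw [filter_insert, if_pos (hst ▸ hb), card_insert_of_notMem (by simp [ht]), filter_erase,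
      card_erase_add_one (by simp [hs, hb])]
  · rw [filter_insert, if_neg (hst ▸ hb), filter_erase, erase_eq_of_notMem (by simp [hb])]

theorem exists_reachable_of_card_filter_eq [DecidableEq G.ConnectedComponent] {S T : Finset W}
    (hcard : ∀ K, #{v ∈ S | G.connectedComponentMk v = K} =
      #{v ∈ T | G.connectedComponentMk v = K})
    {s : W} (hsS : s ∈ S) (hsT : s ∉ T) : ∃ t ∈ T, t ∉ S ∧ G.Reachable s t := by
  by_contra! h
  have hsub : {v ∈ T | G.connectedComponentMk v = G.connectedComponentMk s} ⊆
      {v ∈ S | G.connectedComponentMk v = G.connectedComponentMk s} := by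
    intro v hv
    rw [mem_filter] at hv ⊢
    exact ⟨by_contra fun hvS => h v hv.1 hvS (ConnectedComponent.exact hv.2.symm), hv.2⟩
  have hs : s ∈ {v ∈ S | G.connectedComponentMk v = G.connectedComponentMk s} :=
    mem_filter.2 ⟨hsS, rfl⟩
  rw [← eq_of_subset_of_card_le hsub (hcard _).le] at hs
  exact hsT (mem_filter.1 hs).1

theorem PebbleMove.reflTransGen_of_card_filter_eq [DecidableEq W] [DecidableEq G.ConnectedComponent]
    {S T : Finset W} (hcard : ∀ K, #{v ∈ S | G.connectedComponentMk v = K} =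
      #{v ∈ T | G.connectedComponentMk v = K}) :
    Relation.ReflTransGen (PebbleMove G) S T := by
  by_cases hST : S = T
  · exact hST ▸ .refl
  obtain ⟨s, hsS, hsT, t, htT, htS, hst⟩ :
      ∃ s ∈ S, s ∉ T ∧ ∃ t ∈ T, t ∉ S ∧ G.Reachable s t := by
    by_cases hsub : S ⊆ T
    · obtain ⟨t, htT, htS⟩ := not_subset.1 fun h => hST (Subset.antisymm hsub h)
      obtain ⟨s, hsS, hsT, hts⟩ :=
        exists_reachable_of_card_filter_eq (fun K => (hcard K).symm) htT htS
      exact ⟨s, hsS, hsT, t, htT, htS, hts.symm⟩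
    · obtain ⟨s, hsS, hsT⟩ := not_subset.1 hsub
      exact ⟨s, hsS, hsT, exists_reachable_of_card_filter_eq hcard hsS hsT⟩
  have hcard' K := (card_filter_insert_erase _ hsS htS (ConnectedComponent.sound hst) K).trans
    (hcard K)
  exact (reflTransGen_of_walk hst.some hsS htS).trans (reflTransGen_of_card_filter_eq hcard')
termination_by #(S \ T)
decreasing_by
  rw [insert_sdiff_of_mem _ htT, erase_sdiff_comm]
  exact card_erase_lt_of_mem (mem_sdiff.2 ⟨hsS, hsT⟩)

end PebbleMotion

theorem Function.Injective.update_of_forall_ne {α β : Type*} [DecidableEq α] {f : α → β}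
    (hf : Injective f) (i : α) {b : β} (hb : ∀ j, f j ≠ b) : Injective (update f i b) := by
  intro j k hjk
  simp only [update_apply] at hjk
  split_ifs at hjk with hj hk hk
  · exact hj.trans hk.symm
  · exact absurd hjk.symm (hb k)
  · exact absurd hjk (hb j)
  · exact hf hjk

theorem Finset.image_univ_update {α β : Type*} [Fintype α] [DecidableEq α] [DecidableEq β]
    {f : α → β} (hf : Injective f) (i : α) (b : β) :
    univ.image (update f i b) = insert b ((univ.image f).erase (f i)) := by
  ext c
  simp only [mem_image, mem_univ, true_and, mem_insert, mem_erase, update_apply]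
  constructor
  · rintro ⟨j, rfl⟩
    split_ifs with hj
    · exact .inl rfl
    · exact .inr ⟨hf.ne hj, j, rfl⟩
  · rintro (rfl | ⟨hc, j, rfl⟩)
    · exact ⟨i, if_pos rfl⟩
    · exact ⟨j, if_neg fun hj : j = i => hc (hj ▸ rfl)⟩

theorem exists_perm_apply_eq_of_image_eq {α β : Type*} [Fintype α] [DecidableEq β]
    {f g : α → β} (hf : Injective f) (hg : Injective g) (h : univ.image f = univ.image g) :
    ∃ σ : Equiv.Perm α, ∀ i, g (σ i) = f i := by
  have hrange : Set.range f = Set.range g := by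
    simpa only [coe_image, coe_univ, Set.image_univ] using congrArg ((↑) : Finset β → Set β) h
  refine ⟨(Equiv.ofInjective f hf).trans ((Equiv.setCongr hrange).trans
    (Equiv.ofInjective g hg).symm), fun i => ?_⟩
  simp [Equiv.apply_ofInjective_symm]

theorem card_filter_image_univ {α β : Type*} [Fintype α] [DecidableEq β] {f : α → β}
    (hf : Injective f) (q : β → Prop) [DecidablePred q] :
    #{b ∈ univ.image f | q b} = Nat.card {a // q (f a)} := by
  rw [filter_image, card_image_of_injective _ hf, Nat.card_eq_fintype_card, Fintype.card_subtype]

theorem SameSignature.symm {V ι κ : Type*} {G : SimpleGraph V} {S : ι → V} {T : κ → V}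
    (h : SameSignature G S T) : SameSignature G T S :=
  fun K => (h K).symm

theorem SameSignature.comp_equiv {V ι ι' κ : Type*} {G : SimpleGraph V} {S : ι → V}
    {T : κ → V} (h : SameSignature G S T) (e : ι' ≃ ι) : SameSignature G (S ∘ e) T :=
  fun K => (Nat.card_congr (e.subtypeEquiv fun _ => Iff.rfl)).trans (h K)

section RobotMotion

variable {X : Type*} [TopologicalSpace X] {col : X → X → Prop} {m : ℕ}

theorem MultiRobotPath.refl {V : Set X} (hV : V.Pairwise fun v v' => ¬ col v v')
    {E : Fin m → V} (hE : Injective E) :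
    MultiRobotPath col (fun i => (E i : X)) (fun i => (E i : X)) :=
  ⟨fun _ i => E i, continuous_const, rfl, rfl, fun _ i j hij =>
    hV (E i).2 (E j).2 (Subtype.coe_injective.ne (hE.ne hij))⟩

theorem MultiRobotPath.trans {A B C : Fin m → X} (hAB : MultiRobotPath col A B)
    (hBC : MultiRobotPath col B C) : MultiRobotPath col A C := by
  obtain ⟨f, hf, hf0, hf1, hfcol⟩ := hAB
  obtain ⟨g, hg, hg0, hg1, hgcol⟩ := hBC
  let γ : Path A C := (⟨⟨f, hf⟩, hf0, hf1⟩ : Path A B).trans ⟨⟨g, hg⟩, hg0, hg1⟩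
  refine ⟨γ, γ.continuous, γ.source, γ.target, fun t i j hij => ?_⟩
  rw [Path.trans_apply]
  split_ifs
  exacts [hfcol _ i j hij, hgcol _ i j hij]

theorem MultiRobotPath.comp_perm {A B : Fin m → X} (h : MultiRobotPath col A B)
    (σ : Equiv.Perm (Fin m)) : MultiRobotPath col (A ∘ σ) (B ∘ σ) := by
  obtain ⟨f, hf, hf0, hf1, hfcol⟩ := h
  exact ⟨fun t => f t ∘ σ, by fun_prop, by simp only [hf0], by simp only [hf1],
    fun t i j hij => hfcol t (σ i) (σ j) (σ.injective.ne hij)⟩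

def IsEdgePlanner (col : X → X → Prop) {V : Set X} (G : SimpleGraph V)
    (p : ∀ v v' : V, G.Adj v v' → unitInterval → X) : Prop :=
  ∀ (v v' : V) (h : G.Adj v v'),
    Continuous (p v v' h) ∧ p v v' h 0 = (v : X) ∧ p v v' h 1 = (v' : X) ∧
    ∀ t : unitInterval, ∀ u : V, u ≠ v → u ≠ v' → ¬ col (p v v' h t) (u : X)

variable {V : Set X} {G : SimpleGraph V} {p : ∀ v v' : V, G.Adj v v' → unitInterval → X}

theorem IsEdgePlanner.multiRobotPath_update (hp : IsEdgePlanner col G p) (hsym : Symmetric col)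
    (hV : V.Pairwise fun v v' => ¬ col v v') {E : Fin m → V} (hE : Injective E) {i : Fin m}
    {w : V} (hw : G.Adj (E i) w) (hfree : ∀ j, E j ≠ w) :
    MultiRobotPath col (fun j => (E j : X)) (fun j => (update E i w j : X)) := by
  obtain ⟨hcont, h0, h1, hguard⟩ := hp (E i) w hw
  refine ⟨fun t => update (fun j => (E j : X)) i (p (E i) w hw t),
    continuous_const.update i hcont, by simp [h0], ?_, fun t j k hjk => ?_⟩
  · simp only [h1]
    exact (comp_update Subtype.val E i w).symm
  beta_reduce
  obtain rfl | hj := eq_or_ne j i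
  · rw [update_self, update_of_ne hjk.symm]
    exact hguard t (E k) (hE.ne hjk.symm) (hfree k)
  obtain rfl | hk := eq_or_ne k i
  · rw [update_self, update_of_ne hj]
    exact fun hc => hguard t (E j) (hE.ne hj) (hfree j) (hsym hc)
  · rw [update_of_ne hj, update_of_ne hk]
    exact hV (E j).2 (E k).2 (Subtype.coe_injective.ne (hE.ne hjk))

theorem IsEdgePlanner.exists_multiRobotPath_of_reflTransGen (hp : IsEdgePlanner col G p)
    (hsym : Symmetric col) (hV : V.Pairwise fun v v' => ¬ col v v') [DecidableEq V]
    {S T : Finset V} (hST : Relation.ReflTransGen (PebbleMove G) S T) {E : Fin m → V}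
    (hE : Injective E) (hES : univ.image E = S) :
    ∃ E' : Fin m → V, Injective E' ∧ univ.image E' = T ∧
      MultiRobotPath col (fun i => (E i : X)) (fun i => (E' i : X)) := by
  induction hST with
  | refl => exact ⟨E, hE, hES, .refl hV hE⟩
  | tail _ hmove ih =>
    obtain ⟨E', hE', hES', hpath⟩ := ih
    obtain ⟨v, hv, w, hw, hvw, rfl⟩ := hmove
    obtain ⟨i, -, rfl⟩ := mem_image.1 (hES' ▸ hv)
    have hfree : ∀ j, E' j ≠ w := fun j hj =>
      hw (hES' ▸ hj ▸ mem_image_of_mem E' (mem_univ j))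
    exact ⟨update E' i w, hE'.update_of_forall_ne i hfree, hES' ▸ image_univ_update hE' i w,
      hpath.trans (hp.multiRobotPath_update hsym hV hE' hvw hfree)⟩

theorem IsEdgePlanner.exists_perm_multiRobotPath (hp : IsEdgePlanner col G p)
    (hsym : Symmetric col) (hV : V.Pairwise fun v v' => ¬ col v v') {P Q : Fin m → V}
    (hP : Injective P) (hQ : Injective Q) (hPQ : SameSignature G P Q) :
    ∃ σ : Equiv.Perm (Fin m),
      MultiRobotPath col (fun i => (P i : X)) (fun i => (Q (σ i) : X)) := by
  classical
  have hcard K : #{v ∈ univ.image P | G.connectedComponentMk v = K} =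
      #{v ∈ univ.image Q | G.connectedComponentMk v = K} := by
    rw [card_filter_image_univ hP (G.connectedComponentMk · = K),
      card_filter_image_univ hQ (G.connectedComponentMk · = K)]
    exact hPQ K
  obtain ⟨E, hE, hEQ, hpath⟩ := hp.exists_multiRobotPath_of_reflTransGen hsym hV
    (PebbleMove.reflTransGen_of_card_filter_eq hcard) hP rfl
  obtain ⟨σ, hσ⟩ := exists_perm_apply_eq_of_image_eq hE hQ hEQ
  exact ⟨σ, by simpa only [hσ] using hpath⟩

end RobotMotion

/-- Connecting two pebble graphs: if a multi-robot path connects configuration `C`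
of pebble graph `G` to configuration `C'` of pebble graph `G'`, then any
configurations `D ≡ C` (of `G`) and `D' ≡ C'` (of `G'`) are connected by a
multi-robot path, up to a permutation of the robots. -/
theorem multiRobotPath_between_pebbleGraphs {X : Type*} [TopologicalSpace X]
    (col : X → X → Prop) (hsym : Symmetric col)
    (V V' : Set X) (hV : IsPumped col V) (hV' : IsPumped col V')
    (G : SimpleGraph V) (G' : SimpleGraph V')
    (p : ∀ v v' : V, G.Adj v v' → unitInterval → X)
    (hp : ∀ (v v' : V) (h : G.Adj v v'),
      Continuous (p v v' h) ∧ p v v' h 0 = (v : X) ∧ p v v' h 1 = (v' : X) ∧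
      ∀ t : unitInterval, ∀ u : V, u ≠ v → u ≠ v' → ¬ col (p v v' h t) (u : X))
    (p' : ∀ v v' : V', G'.Adj v v' → unitInterval → X)
    (hp' : ∀ (v v' : V') (h : G'.Adj v v'),
      Continuous (p' v v' h) ∧ p' v v' h 0 = (v : X) ∧ p' v v' h 1 = (v' : X) ∧
      ∀ t : unitInterval, ∀ u : V', u ≠ v → u ≠ v' → ¬ col (p' v v' h t) (u : X))
    {m : ℕ} (C : Fin m → V) (C' : Fin m → V')
    (hC : Function.Injective C) (hC' : Function.Injective C')
    (hconn : MultiRobotPath col (fun i => (C i : X)) (fun i => (C' i : X)))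
    (D : Fin m → V) (D' : Fin m → V')
    (hD : Function.Injective D) (hD' : Function.Injective D')
    (hDC : SameSignature G D C) (hDC' : SameSignature G' D' C') :
    ∃ σ : Equiv.Perm (Fin m),
      MultiRobotPath col (fun i => (D i : X)) (fun i => (D' (σ i) : X)) := by
  obtain ⟨τ, hDCτ⟩ := IsEdgePlanner.exists_perm_multiRobotPath hp hsym hV.2 hD hC hDC
  obtain ⟨σ, hCτD'⟩ := IsEdgePlanner.exists_perm_multiRobotPath hp' hsym hV'.2
    (hC'.comp τ.injective) hD' (hDC'.symm.comp_equiv τ)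
  exact ⟨σ, (hDCτ.trans (hconn.comp_perm τ)).trans hCτD'⟩
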